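/- arXiv:1905.10120 — 3 statements merged into one kernel-verified Lean document; each statement's English description precedes it below -/
import Mathlib

section
/- With p_n = 1/(n² (ln n)²) and r(n) = 1/(n (ln n)²) for n ≥ 2, the series Σ_{n≥2} p_n · (1/r(n)) · Σ_{k=n+1}^∞ r(k) diverges to infinity. -/
/-!
For `n ≥ 2` the `n`-th term is `(1/n) ∑_{k>n} r(k)`. Since `1/log k - 1/log (k+1) ≤ r(k)` and
`1/log k → 0`, the tail telescopes to at least `1/log (n+1)`, so the terms dominate
`1/((n+1) log (n+1))`. That series diverges by the same telescoping device applied to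
`log log`, which tends to infinity with increments `log log (k+1) - log log k ≤ 1/(k log k)`.
The reverse bound `r(k+1) ≤ 1/log k - 1/log (k+1)` makes `r` summable, so that the tails
are genuine sums rather than the junk value `0`.
-/

open Real Filter Topology Finset

section Telescoping

variable {F a : ℕ → ℝ}

theorem summable_of_le_sub_succ (ha : ∀ i, 0 ≤ a i) (hF : ∀ i, 0 ≤ F i)
    (hle : ∀ i, a i ≤ F i - F (i + 1)) : Summable a :=
  summable_of_sum_range_le (c := F 0) ha fun n =>
    calc ∑ i ∈ range n, a i ≤ ∑ i ∈ range n, (F i - F (i + 1)) := sum_le_sum fun i _ => hle i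
      _ = F 0 - F n := sum_range_sub' F n
      _ ≤ F 0 := sub_le_self _ (hF n)

theorem le_tsum_of_sub_succ_le (hF : Tendsto F atTop (𝓝 0)) (ha : Summable a)
    (hle : ∀ i, F i - F (i + 1) ≤ a i) : F 0 ≤ ∑' i, a i := by
  have hlim : Tendsto (fun n => F 0 - F n) atTop (𝓝 (F 0)) := by
    simpa using hF.const_sub (F 0)
  refine le_of_tendsto_of_tendsto' hlim ha.hasSum.tendsto_sum_nat fun n => ?_
  rw [← sum_range_sub']
  exact sum_le_sum fun i _ => hle i

theorem not_summable_of_sub_succ_le (hF : Tendsto F atTop atTop)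
    (hle : ∀ i, F (i + 1) - F i ≤ a i) : ¬ Summable a := fun ha => by
  have : Tendsto (fun n => ∑ i ∈ range n, a i) atTop atTop := by
    refine tendsto_atTop_mono (fun n => ?_) (tendsto_atTop_add_const_right _ (-F 0) hF)
    rw [← sub_eq_add_neg, ← sum_range_sub]
    exact sum_le_sum fun i _ => hle i
  exact not_tendsto_atTop_of_tendsto_nhds ha.hasSum.tendsto_sum_nat this

end Telescoping

theorem tsum_ite_le_eq_tsum_nat_add {G : Type*} [AddCommGroup G] [TopologicalSpace G]
    [IsTopologicalAddGroup G] [T2Space G] (f : ℕ → G) (m : ℕ) :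
    (∑' k, if m ≤ k then f k else 0) = ∑' i, f (i + m) := by
  have hshift : (fun i => if m ≤ i + m then f (i + m) else 0) = fun i => f (i + m) := by
    simp
  by_cases h : Summable fun i => f (i + m)
  · rw [← ((summable_nat_add_iff m).1 (hshift ▸ h)).sum_add_tsum_nat_add m, hshift,
      sum_eq_zero fun k hk => if_neg (by simpa using hk), zero_add]
  · rw [tsum_eq_zero_of_not_summable h, tsum_eq_zero_of_not_summable]
    rwa [← summable_nat_add_iff m, hshift]

section LogEstimates

variable {x : ℝ}

theorem log_add_one_sub_log_le (hx : 0 < x) : log (x + 1) - log x ≤ 1 / x := by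
  have h := log_le_sub_one_of_pos (show 0 < (x + 1) / x by positivity)
  rw [log_div (by positivity) hx.ne'] at h
  calc _ ≤ (x + 1) / x - 1 := h
    _ = 1 / x := by field_simp; ring

theorem one_div_add_one_le_log_add_one_sub_log (hx : 0 < x) :
    1 / (x + 1) ≤ log (x + 1) - log x := by
  have h := one_sub_inv_le_log_of_pos (show 0 < (x + 1) / x by positivity)
  rw [log_div (by positivity) hx.ne'] at h
  calc 1 / (x + 1) = 1 - ((x + 1) / x)⁻¹ := by field_simp; ring
    _ ≤ _ := h

theorem one_div_log_sub_one_div_log_add_one (hx : 1 < x) :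
    1 / log x - 1 / log (x + 1) = (log (x + 1) - log x) / (log x * log (x + 1)) := by
  have : 0 < log x := log_pos hx
  have : 0 < log (x + 1) := log_pos (by linarith)
  field_simp

theorem one_div_log_sub_one_div_log_add_one_le (hx : 1 < x) :
    1 / log x - 1 / log (x + 1) ≤ 1 / (x * log x ^ 2) := by
  have hlog : 0 < log x := log_pos hx
  have hmono : log x ≤ log (x + 1) := log_le_log (by linarith) (by linarith)
  rw [one_div_log_sub_one_div_log_add_one hx]
  calc _ ≤ (1 / x) / (log x * log x) := by
        gcongr
        exact log_add_one_sub_log_le (by linarith)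
    _ = 1 / (x * log x ^ 2) := by field_simp

theorem one_div_mul_log_sq_le_one_div_log_sub_one_div_log_add_one (hx : 1 < x) :
    1 / ((x + 1) * log (x + 1) ^ 2) ≤ 1 / log x - 1 / log (x + 1) := by
  have hlog : 0 < log x := log_pos hx
  have hmono : log x ≤ log (x + 1) := log_le_log (by linarith) (by linarith)
  have hlog' : 0 < log (x + 1) := hlog.trans_le hmono
  rw [one_div_log_sub_one_div_log_add_one hx]
  calc 1 / ((x + 1) * log (x + 1) ^ 2) = (1 / (x + 1)) / (log (x + 1) * log (x + 1)) := by
        field_simp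
    _ ≤ (log (x + 1) - log x) / (log x * log (x + 1)) := div_le_div₀ (sub_nonneg.2 hmono)
        (one_div_add_one_le_log_add_one_sub_log (by linarith)) (mul_pos hlog hlog') (by gcongr)

theorem log_log_add_one_sub_log_log_le (hx : 1 < x) :
    log (log (x + 1)) - log (log x) ≤ 1 / (x * log x) := by
  have hlog : 0 < log x := log_pos hx
  have hlog' : 0 < log (x + 1) := log_pos (by linarith)
  rw [← log_div hlog'.ne' hlog.ne']
  calc _ ≤ log (x + 1) / log x - 1 := log_le_sub_one_of_pos (by positivity)
    _ = (log (x + 1) - log x) / log x := by field_simp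
    _ ≤ (1 / x) / log x := by
        gcongr
        exact log_add_one_sub_log_le (by linarith)
    _ = 1 / (x * log x) := by field_simp

end LogEstimates

theorem summable_one_div_mul_log_sq : Summable fun n : ℕ => 1 / ((n : ℝ) * log n ^ 2) := by
  rw [← summable_nat_add_iff 3]
  refine summable_of_le_sub_succ (F := fun i : ℕ => 1 / log ((i : ℝ) + 2))
    (fun i => by positivity) (fun i => ?_) (fun i => ?_)
  · have : 0 < log ((i : ℝ) + 2) := log_pos (by linarith [i.cast_nonneg (α := ℝ)])
    positivity
  · have h := one_div_mul_log_sq_le_one_div_log_sub_one_div_log_add_one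
      (x := (i : ℝ) + 2) (by linarith [i.cast_nonneg (α := ℝ)])
    push_cast
    convert h using 3 <;> ring_nf

theorem one_div_log_add_one_le_tsum_tail {n : ℕ} (hn : 1 ≤ n) :
    1 / log ((n : ℝ) + 1) ≤ ∑' k : ℕ, if n + 1 ≤ k then 1 / ((k : ℝ) * log k ^ 2) else 0 := by
  have hn' : (1 : ℝ) ≤ n := by exact_mod_cast hn
  rw [tsum_ite_le_eq_tsum_nat_add]
  convert le_tsum_of_sub_succ_le (F := fun i : ℕ => 1 / log ((i : ℝ) + (n + 1))) ?_
    ((summable_nat_add_iff (n + 1)).2 summable_one_div_mul_log_sq) (fun i => ?_) using 1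
  · simp
  · have h : Tendsto (fun i : ℕ => (i : ℝ) + (n + 1)) atTop atTop :=
      tendsto_atTop_add_const_right _ _ tendsto_natCast_atTop_atTop
    simp only [one_div]
    exact (tendsto_log_atTop.comp h).inv_tendsto_atTop
  · have h := one_div_log_sub_one_div_log_add_one_le
      (x := (i : ℝ) + (n + 1)) (by linarith [i.cast_nonneg (α := ℝ)])
    push_cast
    convert h using 3
    ring_nf

theorem not_summable_one_div_mul_log : ¬ Summable fun n : ℕ => 1 / ((n : ℝ) * log n) := by
  rw [← summable_nat_add_iff 2]
  have h : Tendsto (fun i : ℕ => (i : ℝ) + 2) atTop atTop :=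
    tendsto_atTop_add_const_right _ _ tendsto_natCast_atTop_atTop
  refine not_summable_of_sub_succ_le (F := fun i : ℕ => log (log ((i : ℝ) + 2)))
    (tendsto_log_atTop.comp (tendsto_log_atTop.comp h)) fun i => ?_
  have h := log_log_add_one_sub_log_log_le (x := (i : ℝ) + 2) (by linarith [i.cast_nonneg (α := ℝ)])
  push_cast
  convert h using 4
  ring_nf

/-- With `p_n = 1/(n² (ln n)²)` and `r(n) = 1/(n (ln n)²)`, the series
`∑_{n ≥ 2} p_n · (1/r(n)) · ∑_{k=n+1}^∞ r(k)` diverges to infinity (equivalently, this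
series of nonnegative terms is not summable). -/
theorem jumps_series_diverges
    (p r : ℕ → ℝ)
    (hp : ∀ n, p n = 1 / ((n : ℝ) ^ 2 * Real.log n ^ 2))
    (hr : ∀ n, r n = 1 / ((n : ℝ) * Real.log n ^ 2)) :
    ¬ Summable (fun n : ℕ => if 2 ≤ n then
        p n * (1 / r n) * (∑' k : ℕ, if n + 1 ≤ k then r k else 0) else 0) := by
  have hcoef : ∀ n : ℕ, 2 ≤ n → p n * (1 / r n) = 1 / n := fun n hn => by
    have : 0 < log (n : ℝ) := log_pos (by exact_mod_cast hn)
    rw [hp, hr]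
    field_simp
  intro H
  refine not_summable_one_div_mul_log ((summable_nat_add_iff 3).1 ?_)
  refine ((summable_nat_add_iff 2).2 H).of_nonneg_of_le (fun i => by positivity) fun i => ?_
  have hi : 2 ≤ i + 2 := Nat.le_add_left 2 i
  rw [if_pos hi, hcoef _ hi]
  simp only [hr]
  have hlog : 0 < log ((i : ℝ) + 3) := log_pos (by linarith [i.cast_nonneg (α := ℝ)])
  calc 1 / (((i + 3 : ℕ) : ℝ) * log (i + 3 : ℕ))
      ≤ 1 / ((i + 2 : ℕ) : ℝ) * (1 / log (((i + 2 : ℕ) : ℝ) + 1)) := by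
        push_cast
        rw [one_div_mul_one_div, show (i : ℝ) + 2 + 1 = i + 3 by ring]
        gcongr
        linarith
    _ ≤ _ := by
        gcongr
        exact one_div_log_add_one_le_tsum_tail (by omega)
end

section
/- Let P₁ and P₂ be doubly stochastic Markov kernels on a countable set X with P₂ symmetric, and suppose there exists ε > 0 such that P₁(x,y) ≥ ε·P₂(x,y) for all x,y ∈ X. If P₂ is transient (its Green function G₂(x,x) is finite for all x), then P₁ is transient. -/
open scoped ENNReal

noncomputable def kpow {X : Type*} [DecidableEq X] (p : X → X → ℝ≥0∞) : ℕ → X → X → ℝ≥0∞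
  | 0 => fun x y => if x = y then 1 else 0
  | n + 1 => fun x y => ∑' z, kpow p n x z * p z y

noncomputable def green {X : Type*} [DecidableEq X] (p : X → X → ℝ≥0∞) (x y : X) : ℝ≥0∞ :=
  ∑' n, kpow p n x y

/-!
For `z < 1` let `G_z = ∑ zⁿ Pⁿ` and let `B_z^P(f, g) = ⟪f, g⟫ - z ⟪f, P g⟫` on `ℓ²(X)`.
The resolvent identity `G_z = δ + z G_z P` says that the row `u = G_z^P(x, ·)` represents
evaluation at `x`: `B_z^P(u, g) = g x` for all `g`. Since `P₁ - ε P₂` is `1 - ε` times a doubly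
stochastic kernel, `ε B_z^{P₂}(g, g) ≤ B_z^{P₁}(g, g)`, and `B_z^{P₂}` is a positive semidefinite
symmetric form because `P₂` is symmetric and doubly stochastic. With `u`, `v` the rows of
`G_z^{P₁}`, `G_z^{P₂}` at `x`, Cauchy–Schwarz gives
`u(x)² = B_z^{P₂}(u, v)² ≤ B_z^{P₂}(u, u) B_z^{P₂}(v, v) ≤ ε⁻¹ u(x) v(x)`,
that is `ε G_z^{P₁}(x, x) ≤ G_z^{P₂}(x, x)`, and `z → 1` gives the same bound for the Green
functions.
-/

open scoped InnerProductSpace lp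

structure IsScaledDoublyStochastic {X : Type*} (c : ℝ) (d : X → X → ℝ) : Prop where
  nonneg : ∀ x y, 0 ≤ d x y
  hasSum_row : ∀ x, HasSum (d x) c
  hasSum_col : ∀ y, HasSum (fun x => d x y) c

noncomputable def kernelForm {X : Type*} (d : X → X → ℝ) (f g : X → ℝ) : ℝ :=
  ∑' q : X × X, f q.1 * d q.1 q.2 * g q.2

namespace IsScaledDoublyStochastic

variable {X : Type*} {c : ℝ} {d : X → X → ℝ}

lemma transpose (hd : IsScaledDoublyStochastic c d) :
    IsScaledDoublyStochastic c (fun x y => d y x) :=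
  ⟨fun x y => hd.nonneg y x, hd.hasSum_col, hd.hasSum_row⟩

lemma hasSum_mul_sq_fst (hd : IsScaledDoublyStochastic c d) (f : ℓ²(X, ℝ)) :
    HasSum (fun q : X × X => d q.1 q.2 * f q.1 ^ 2) (c * ‖f‖ ^ 2) := by
  have hfiber : ∀ w, HasSum (fun y => d w y * f w ^ 2) (c * f w ^ 2) :=
    fun w => (hd.hasSum_row w).mul_right _
  have hsq : HasSum (fun w => c * f w ^ 2) (c * ‖f‖ ^ 2) := by
    simpa [Real.inner_apply] using (lp.hasSum_inner f f).mul_left c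
  have hsum : Summable (fun q : X × X => d q.1 q.2 * f q.1 ^ 2) :=
    (summable_prod_of_nonneg fun q => mul_nonneg (hd.nonneg _ _) (sq_nonneg _)).2
      ⟨fun w => (hfiber w).summable, by simpa only [(hfiber _).tsum_eq] using hsq.summable⟩
  convert hsum.hasSum using 1
  rw [hsum.tsum_prod, ← hsq.tsum_eq]
  exact tsum_congr fun w => (hfiber w).tsum_eq.symm

lemma hasSum_mul_sq_snd (hd : IsScaledDoublyStochastic c d) (f : ℓ²(X, ℝ)) :
    HasSum (fun q : X × X => d q.1 q.2 * f q.2 ^ 2) (c * ‖f‖ ^ 2) :=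
  (Equiv.prodComm X X).hasSum_iff.1 (hd.transpose.hasSum_mul_sq_fst f)

lemma summable_kernelForm (hd : IsScaledDoublyStochastic c d) (f g : ℓ²(X, ℝ)) :
    Summable (fun q : X × X => f q.1 * d q.1 q.2 * g q.2) := by
  refine ((hd.hasSum_mul_sq_fst f).summable.add (hd.hasSum_mul_sq_snd g).summable).of_norm_bounded
    fun q => ?_
  have := hd.nonneg q.1 q.2
  rw [Real.norm_eq_abs, abs_mul, abs_mul, abs_of_nonneg this]
  nlinarith [mul_nonneg this (sq_nonneg (|f q.1| - |g q.2|)), sq_abs (f q.1), sq_abs (g q.2)]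

lemma kernelForm_self_le (hd : IsScaledDoublyStochastic c d) (f : ℓ²(X, ℝ)) :
    kernelForm d f f ≤ c * ‖f‖ ^ 2 := by
  have hbound := ((hd.hasSum_mul_sq_fst f).add (hd.hasSum_mul_sq_snd f)).div_const 2
  refine hasSum_le (fun q => ?_) (hd.summable_kernelForm f f).hasSum (by simpa using hbound)
  nlinarith [mul_nonneg (hd.nonneg q.1 q.2) (sq_nonneg (f q.1 - f q.2))]

lemma mul_kernelForm_self_le (hd : IsScaledDoublyStochastic c d) {z : ℝ} (hz₀ : 0 ≤ z)
    (hz₁ : z ≤ 1) (f : ℓ²(X, ℝ)) : z * kernelForm d f f ≤ c * ‖f‖ ^ 2 := by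
  have hle := hd.kernelForm_self_le f
  rcases le_total 0 (kernelForm d f f) with hpos | hneg
  · exact (mul_le_of_le_one_left hpos hz₁).trans hle
  · have hnonneg : 0 ≤ c * ‖f‖ ^ 2 :=
      (hd.hasSum_mul_sq_fst f).nonneg fun q => mul_nonneg (hd.nonneg _ _) (sq_nonneg _)
    exact (mul_nonpos_of_nonneg_of_nonpos hz₀ hneg).trans hnonneg

lemma sub_const_mul {c₁ c₂ a : ℝ} {d₁ d₂ : X → X → ℝ} (hd₁ : IsScaledDoublyStochastic c₁ d₁)
    (hd₂ : IsScaledDoublyStochastic c₂ d₂) (hle : ∀ x y, a * d₂ x y ≤ d₁ x y) :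
    IsScaledDoublyStochastic (c₁ - a * c₂) (fun x y => d₁ x y - a * d₂ x y) :=
  ⟨fun x y => sub_nonneg.2 (hle x y),
    fun x => (hd₁.hasSum_row x).sub ((hd₂.hasSum_row x).mul_left a),
    fun y => (hd₁.hasSum_col y).sub ((hd₂.hasSum_col y).mul_left a)⟩

lemma kernelForm_sub_const_mul {c₁ c₂ a : ℝ} {d₁ d₂ : X → X → ℝ}
    (hd₁ : IsScaledDoublyStochastic c₁ d₁) (hd₂ : IsScaledDoublyStochastic c₂ d₂)
    (f g : ℓ²(X, ℝ)) :
    kernelForm (fun x y => d₁ x y - a * d₂ x y) f g =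
      kernelForm d₁ f g - a * kernelForm d₂ f g := by
  rw [kernelForm, kernelForm, kernelForm, ← tsum_mul_left,
    ← (hd₁.summable_kernelForm f g).tsum_sub ((hd₂.summable_kernelForm f g).mul_left a)]
  exact tsum_congr fun q => by ring

noncomputable def kernelBilinForm (hd : IsScaledDoublyStochastic c d) :
    LinearMap.BilinForm ℝ ℓ²(X, ℝ) :=
  LinearMap.mk₂ ℝ (fun f g => kernelForm d f g)
    (fun f f' g => by
      simp only [kernelForm, lp.coeFn_add, Pi.add_apply, add_mul]
      exact (hd.summable_kernelForm f g).tsum_add (hd.summable_kernelForm f' g))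
    (fun a f g => by
      simp only [kernelForm, lp.coeFn_smul, Pi.smul_apply, smul_eq_mul, mul_assoc]
      exact tsum_mul_left)
    (fun f g g' => by
      simp only [kernelForm, lp.coeFn_add, Pi.add_apply, mul_add]
      exact (hd.summable_kernelForm f g).tsum_add (hd.summable_kernelForm f g'))
    (fun a f g => by
      simp only [kernelForm, lp.coeFn_smul, Pi.smul_apply, smul_eq_mul, mul_left_comm _ a]
      exact tsum_mul_left)

end IsScaledDoublyStochastic

lemma kernelForm_comm {X : Type*} {d : X → X → ℝ} (hd : ∀ x y, d x y = d y x) (f g : X → ℝ) :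
    kernelForm d f g = kernelForm d g f := by
  rw [kernelForm, ← (Equiv.prodComm X X).tsum_eq]
  exact tsum_congr fun q => by
    simp only [Equiv.prodComm_apply, Prod.fst_swap, Prod.snd_swap, hd q.2 q.1]
    ring

section DirichletForm

variable {X : Type*} {p : X → X → ℝ}

noncomputable def dirichletForm (hp : IsScaledDoublyStochastic 1 p) (z : ℝ) :
    LinearMap.BilinForm ℝ ℓ²(X, ℝ) :=
  innerₗ ℓ²(X, ℝ) - z • hp.kernelBilinForm

lemma dirichletForm_apply (hp : IsScaledDoublyStochastic 1 p) (z : ℝ) (f g : ℓ²(X, ℝ)) :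
    dirichletForm hp z f g = ⟪f, g⟫_ℝ - z * kernelForm p f g :=
  rfl

lemma dirichletForm_self_nonneg (hp : IsScaledDoublyStochastic 1 p) {z : ℝ} (hz₀ : 0 ≤ z)
    (hz₁ : z ≤ 1) (f : ℓ²(X, ℝ)) : 0 ≤ dirichletForm hp z f f := by
  rw [dirichletForm_apply, real_inner_self_eq_norm_sq]
  linarith [hp.mul_kernelForm_self_le hz₀ hz₁ f]

lemma mul_dirichletForm_self_le {p₁ p₂ : X → X → ℝ} (hp₁ : IsScaledDoublyStochastic 1 p₁)
    (hp₂ : IsScaledDoublyStochastic 1 p₂) {ε : ℝ} (hcomp : ∀ x y, ε * p₂ x y ≤ p₁ x y) {z : ℝ}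
    (hz₀ : 0 ≤ z) (hz₁ : z ≤ 1) (f : ℓ²(X, ℝ)) :
    ε * dirichletForm hp₂ z f f ≤ dirichletForm hp₁ z f f := by
  have hdiff := (hp₁.sub_const_mul hp₂ hcomp).mul_kernelForm_self_le hz₀ hz₁ f
  rw [IsScaledDoublyStochastic.kernelForm_sub_const_mul hp₁ hp₂] at hdiff
  rw [dirichletForm_apply, dirichletForm_apply, real_inner_self_eq_norm_sq]
  linarith

lemma dirichletForm_eq_of_resolvent_identity [DecidableEq X] (hp : IsScaledDoublyStochastic 1 p)
    {z : ℝ} {x₀ : X} {u : ℓ²(X, ℝ)}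
    (hu : ∀ y, u y = (if x₀ = y then 1 else 0) + z * ∑' w, u w * p w y)
    (g : ℓ²(X, ℝ)) : dirichletForm hp z u g = g x₀ := by
  have hS : Summable fun q : X × X => u q.2 * p q.2 q.1 * g q.1 :=
    (hp.summable_kernelForm u g).prod_symm
  have hcol : ∀ y, ∑' w, u w * p w y * g y = (∑' w, u w * p w y) * g y :=
    fun y => tsum_mul_right
  have hQ : kernelForm p u g = ∑' y, (∑' w, u w * p w y) * g y := by
    rw [kernelForm, ← (Equiv.prodComm X X).tsum_eq]
    exact hS.tsum_prod.trans (tsum_congr hcol)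
  have hsum : Summable fun y => (∑' w, u w * p w y) * g y :=
    hS.prod.congr hcol
  have hpt : ∀ y, u y * g y = (if y = x₀ then g y else 0) + z * ((∑' w, u w * p w y) * g y) := by
    intro y
    rcases eq_or_ne y x₀ with rfl | hne
    · rw [hu, if_pos rfl, if_pos rfl]; ring
    · rw [hu, if_neg hne.symm, if_neg hne]; ring
  rw [dirichletForm_apply, lp.inner_eq_tsum, hQ]
  simp only [Real.inner_apply]
  rw [tsum_congr hpt, Summable.tsum_add, tsum_ite_eq, tsum_mul_left]
  · ring
  · exact summable_of_ne_finset_zero (s := {x₀}) fun y hy => if_neg (by simpa using hy)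
  · exact hsum.mul_left z

theorem mul_apply_le_apply_of_dirichletForm_eq {p₁ p₂ : X → X → ℝ}
    (hp₁ : IsScaledDoublyStochastic 1 p₁) (hp₂ : IsScaledDoublyStochastic 1 p₂)
    (hsymm : ∀ x y, p₂ x y = p₂ y x) {ε : ℝ} (hε : 0 ≤ ε) (hcomp : ∀ x y, ε * p₂ x y ≤ p₁ x y)
    {z : ℝ} (hz₀ : 0 ≤ z) (hz₁ : z ≤ 1) {x₀ : X} {u v : ℓ²(X, ℝ)}
    (hu : ∀ g, dirichletForm hp₁ z u g = g x₀) (hv : ∀ g, dirichletForm hp₂ z v g = g x₀)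
    (hu₀ : 0 < u x₀) : ε * u x₀ ≤ v x₀ := by
  set B := dirichletForm hp₂ z
  have hB : ∀ f, 0 ≤ B f f := dirichletForm_self_nonneg hp₂ hz₀ hz₁
  have hcross : B u v = u x₀ := by
    rw [dirichletForm_apply, real_inner_comm, kernelForm_comm hsymm, ← dirichletForm_apply hp₂, hv]
  have hcs := B.apply_mul_apply_le_of_forall_zero_le hB u v
  rw [hcross, hv, hv] at hcs
  have hcomp' : ε * B u u ≤ u x₀ := (hu u) ▸ mul_dirichletForm_self_le hp₁ hp₂ hcomp hz₀ hz₁ u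
  have hv₀ : 0 ≤ v x₀ := hv v ▸ hB v
  nlinarith [mul_le_mul_of_nonneg_left hcs hε, mul_le_mul_of_nonneg_right hcomp' hv₀]

end DirichletForm

open Filter Topology in
lemma ENNReal.tsum_le_of_forall_lt_one {c : ℕ → ℝ≥0∞} {a : ℝ≥0∞}
    (h : ∀ z < 1, ∑' n, z ^ n * c n ≤ a) : ∑' n, c n ≤ a := by
  rw [ENNReal.tsum_eq_iSup_sum]
  refine iSup_le fun s => ?_
  have hlim : Tendsto (fun z => ∑ n ∈ s, z ^ n * c n) (𝓝[<] 1) (𝓝 (∑ n ∈ s, c n)) := by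
    refine tendsto_finsetSum _ fun n _ => ?_
    have hpow : Tendsto (fun z : ℝ≥0∞ => z ^ n) (𝓝[<] 1) (𝓝 1) := by
      simpa using ((ENNReal.continuous_pow n).tendsto 1).mono_left nhdsWithin_le_nhds
    simpa using ENNReal.Tendsto.mul_const hpow (Or.inl one_ne_zero)
  exact le_of_tendsto hlim
    (eventually_nhdsWithin_of_forall fun z hz => (ENNReal.sum_le_tsum s).trans (h z hz))

lemma ENNReal.hasSum_toReal_tsum {X : Type*} {f : X → ℝ≥0∞} (hf : ∑' x, f x ≠ ∞) :
    HasSum (fun x => (f x).toReal) (∑' x, f x).toReal := by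
  rw [ENNReal.tsum_toReal_eq (ENNReal.ne_top_of_tsum_ne_top hf)]
  exact ENNReal.hasSum_toReal hf

lemma isScaledDoublyStochastic_toReal {X : Type*} {P : X → X → ℝ≥0∞} (hrow : ∀ x, ∑' y, P x y = 1)
    (hcol : ∀ y, ∑' x, P x y = 1) : IsScaledDoublyStochastic 1 fun x y => (P x y).toReal :=
  ⟨fun _ _ => ENNReal.toReal_nonneg,
    fun x => by simpa [hrow x] using ENNReal.hasSum_toReal_tsum (f := P x) (by simp [hrow x]),
    fun y => by
      simpa [hcol y] using ENNReal.hasSum_toReal_tsum (f := fun x => P x y) (by simp [hcol y])⟩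

section Resolvent

variable {X : Type*} [DecidableEq X] {P : X → X → ℝ≥0∞}

lemma tsum_kpow (hrow : ∀ x, ∑' y, P x y = 1) (n : ℕ) (x : X) : ∑' y, kpow P n x y = 1 := by
  induction n generalizing x with
  | zero => simp [kpow]
  | succ n ih =>
    simp only [kpow]
    rw [ENNReal.tsum_comm]
    simp only [ENNReal.tsum_mul_left, hrow, mul_one, ih]

noncomputable def greenSeries (P : X → X → ℝ≥0∞) (z : ℝ≥0∞) (x y : X) : ℝ≥0∞ :=
  ∑' n, z ^ n * kpow P n x y

lemma greenSeries_eq (P : X → X → ℝ≥0∞) (z : ℝ≥0∞) (x y : X) :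
    greenSeries P z x y = (if x = y then 1 else 0) + z * ∑' w, greenSeries P z x w * P w y := by
  rw [greenSeries, tsum_eq_zero_add' ENNReal.summable]
  congr 1
  · simp [kpow]
  · simp only [greenSeries, kpow, ← ENNReal.tsum_mul_left, ← ENNReal.tsum_mul_right]
    rw [ENNReal.tsum_comm]
    exact tsum_congr fun w => tsum_congr fun n => by ring

lemma tsum_greenSeries (hrow : ∀ x, ∑' y, P x y = 1) (z : ℝ≥0∞) (x : X) :
    ∑' y, greenSeries P z x y = (1 - z)⁻¹ := by
  simp only [greenSeries]
  rw [ENNReal.tsum_comm]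
  simp only [ENNReal.tsum_mul_left, tsum_kpow hrow, mul_one, ENNReal.tsum_geometric]

lemma greenSeries_ne_top (hrow : ∀ x, ∑' y, P x y = 1) {z : ℝ≥0∞} (hz : z < 1) (x y : X) :
    greenSeries P z x y ≠ ∞ := by
  refine ENNReal.ne_top_of_tsum_ne_top ?_ y
  rw [tsum_greenSeries hrow]
  exact ENNReal.inv_ne_top.2 (tsub_pos_of_lt hz).ne'

lemma one_le_greenSeries_self (P : X → X → ℝ≥0∞) (z : ℝ≥0∞) (x : X) : 1 ≤ greenSeries P z x x :=
  le_of_eq_of_le (by simp [kpow]) (ENNReal.le_tsum 0)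

lemma greenSeries_le_green (P : X → X → ℝ≥0∞) {z : ℝ≥0∞} (hz : z ≤ 1) (x y : X) :
    greenSeries P z x y ≤ green P x y :=
  ENNReal.tsum_le_tsum fun n => mul_le_of_le_one_left' (pow_le_one' hz n)

lemma memℓp_greenSeries_toReal (hrow : ∀ x, ∑' y, P x y = 1) {z : ℝ≥0∞} (hz : z < 1) (x : X) :
    Memℓp (fun y => (greenSeries P z x y).toReal) 2 := by
  refine Memℓp.of_exponent_ge (memℓp_gen ?_) one_le_two
  have hsum := tsum_greenSeries hrow z x
  simpa using ENNReal.summable_toReal (hsum ▸ ENNReal.inv_ne_top.2 (tsub_pos_of_lt hz).ne')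

lemma greenSeries_toReal_eq (hrow : ∀ x, ∑' y, P x y = 1) {z : ℝ≥0∞} (hz : z < 1) (x y : X) :
    (greenSeries P z x y).toReal =
      (if x = y then 1 else 0) +
        z.toReal * ∑' w, (greenSeries P z x w).toReal * (P w y).toReal := by
  have hfin := greenSeries_ne_top hrow hz x y
  have hP : ∀ w, P w y ≠ ∞ := fun w => ENNReal.ne_top_of_tsum_ne_top (by simp [hrow w]) y
  rw [greenSeries_eq P z x y] at hfin ⊢
  obtain ⟨hδ, hrest⟩ := ENNReal.add_ne_top.1 hfin
  rw [ENNReal.toReal_add hδ hrest, ENNReal.toReal_mul,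
    ENNReal.tsum_toReal_eq fun w => ENNReal.mul_ne_top (greenSeries_ne_top hrow hz x w) (hP w)]
  simp only [ENNReal.toReal_mul]
  split_ifs <;> simp

theorem mul_greenSeries_self_le {P₁ P₂ : X → X → ℝ≥0∞}
    (h₁row : ∀ x, ∑' y, P₁ x y = 1) (h₁col : ∀ y, ∑' x, P₁ x y = 1)
    (h₂row : ∀ x, ∑' y, P₂ x y = 1) (h₂col : ∀ y, ∑' x, P₂ x y = 1)
    (h₂symm : ∀ x y, P₂ x y = P₂ y x) {ε : ℝ≥0∞} (hcomp : ∀ x y, ε * P₂ x y ≤ P₁ x y)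
    {z : ℝ≥0∞} (hz : z < 1) (x : X) : ε * greenSeries P₁ z x x ≤ greenSeries P₂ z x x := by
  have hP₁top : ∀ w y, P₁ w y ≠ ∞ :=
    fun w y => ENNReal.ne_top_of_tsum_ne_top (by simp [h₁row w]) y
  have hε : ε ≤ 1 :=
    calc ε = ∑' y, ε * P₂ x y := by rw [ENNReal.tsum_mul_left, h₂row, mul_one]
      _ ≤ ∑' y, P₁ x y := ENNReal.tsum_le_tsum (hcomp x)
      _ = 1 := h₁row x
  let u : ℓ²(X, ℝ) := ⟨_, memℓp_greenSeries_toReal h₁row hz x⟩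
  let v : ℓ²(X, ℝ) := ⟨_, memℓp_greenSeries_toReal h₂row hz x⟩
  have hP₁ := isScaledDoublyStochastic_toReal h₁row h₁col
  have hP₂ := isScaledDoublyStochastic_toReal h₂row h₂col
  have hreal : ε.toReal * u x ≤ v x :=
    mul_apply_le_apply_of_dirichletForm_eq hP₁ hP₂ (fun w y => by rw [h₂symm])
      ENNReal.toReal_nonneg
      (fun w y => ENNReal.toReal_mul.symm.trans_le (ENNReal.toReal_mono (hP₁top w y) (hcomp w y)))
      ENNReal.toReal_nonneg (by simpa using ENNReal.toReal_mono ENNReal.one_ne_top hz.le)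
      (dirichletForm_eq_of_resolvent_identity hP₁ (greenSeries_toReal_eq h₁row hz x))
      (dirichletForm_eq_of_resolvent_identity hP₂ (greenSeries_toReal_eq h₂row hz x))
      (ENNReal.toReal_pos (zero_lt_one.trans_le (one_le_greenSeries_self P₁ z x)).ne'
        (greenSeries_ne_top h₁row hz x x))
  have hεtop : ε ≠ ∞ := ne_top_of_le_ne_top ENNReal.one_ne_top hε
  rwa [← ENNReal.toReal_mul, ENNReal.toReal_le_toReal
    (ENNReal.mul_ne_top hεtop (greenSeries_ne_top h₁row hz x x))
    (greenSeries_ne_top h₂row hz x x)] at hreal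

end Resolvent

theorem comparison_lemma_general {X : Type*} [DecidableEq X]
    (P₁ P₂ : X → X → ℝ≥0∞)
    (h₁row : ∀ x, ∑' y, P₁ x y = 1) (h₁col : ∀ y, ∑' x, P₁ x y = 1)
    (h₂row : ∀ x, ∑' y, P₂ x y = 1) (h₂col : ∀ y, ∑' x, P₂ x y = 1)
    (h₂symm : ∀ x y, P₂ x y = P₂ y x)
    (ε : ℝ≥0∞) (hε : 0 < ε) (hcomp : ∀ x y, ε * P₂ x y ≤ P₁ x y)
    (h₂trans : ∀ x, green P₂ x x ≠ ∞) :
    ∀ x, green P₁ x x ≠ ∞ := by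
  intro x hx
  have hgreen : ε * green P₁ x x ≤ green P₂ x x := by
    rw [green, ← ENNReal.tsum_mul_left]
    refine ENNReal.tsum_le_of_forall_lt_one fun z hz => ?_
    calc ∑' n, z ^ n * (ε * kpow P₁ n x x) = ε * greenSeries P₁ z x x := by
          rw [greenSeries, ← ENNReal.tsum_mul_left]
          exact tsum_congr fun n => mul_left_comm _ _ _
      _ ≤ greenSeries P₂ z x x :=
          mul_greenSeries_self_le h₁row h₁col h₂row h₂col h₂symm hcomp hz x
      _ ≤ green P₂ x x := greenSeries_le_green P₂ hz.le x x
  rw [hx, ENNReal.mul_top hε.ne'] at hgreen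
  exact h₂trans x (top_le_iff.1 hgreen)

/-- Comparison lemma of Baldi–Lohoué–Peyrière: if `P₁, P₂` are doubly stochastic kernels on a
countable set, `P₂` is symmetric, `P₁ ≥ ε P₂` with `ε > 0`, and `P₂` is transient, then `P₁`
is transient. -/
theorem comparison_lemma {X : Type*} [Countable X] [DecidableEq X]
    (P₁ P₂ : X → X → ℝ≥0∞)
    (h₁row : ∀ x, ∑' y, P₁ x y = 1) (h₁col : ∀ y, ∑' x, P₁ x y = 1)
    (h₂row : ∀ x, ∑' y, P₂ x y = 1) (h₂col : ∀ y, ∑' x, P₂ x y = 1)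
    (h₂symm : ∀ x y, P₂ x y = P₂ y x)
    (ε : ℝ≥0∞) (hε : 0 < ε) (hcomp : ∀ x y, ε * P₂ x y ≤ P₁ x y)
    (h₂trans : ∀ x, green P₂ x x ≠ ∞) :
    ∀ x, green P₁ x x ≠ ∞ :=
  comparison_lemma_general P₁ P₂ h₁row h₁col h₂row h₂col h₂symm ε hε hcomp h₂trans
end

section
/- For a nearest-neighbour random walk on ℕ₀ as above with Σ_k r(e_k) < ∞, the Green function satisfies G(n,n) = (1/(r(e_n)·P(n,n−1))) · Σ_{k=n+1}^∞ r(e_k) for every n ≥ 1. -/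
/-!
The Green function `G(·, n)` is the minimal solution of `h = δₙ + P h`. Detailed balance
`a_k r(e_{k+1}) = b_k r(e_k)` shows that `h(x) = (r(e_n) b_n)⁻¹ ∑_{k > max x n} r(e_k)` solves
this equation: the flux of `h` vanishes away from `n` and is one at `n`. Then `h - G` is a finite
harmonic function bounded by `h`. Harmonic functions of a walk reflected at `0` are constant, and
`h → 0` by transience, so `G = h`.
-/

open scoped ENNReal

open Filter Topology

section Green

variable {X : Type*} [DecidableEq X] (p : X → X → ℝ≥0∞)

lemma kpow_succ' (m : ℕ) (x y : X) : kpow p (m + 1) x y = ∑' z, p x z * kpow p m z y := by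
  induction m generalizing y with
  | zero => simp [kpow, ite_mul, mul_ite]
  | succ m ih =>
    calc kpow p (m + 2) x y = ∑' z, (∑' w, p x w * kpow p m w z) * p z y := by
          simp_rw [kpow, ← ih]; rfl
      _ = ∑' w, p x w * ∑' z, kpow p m w z * p z y := by
          simp_rw [← ENNReal.tsum_mul_right, ← ENNReal.tsum_mul_left, mul_assoc]
          exact ENNReal.tsum_comm
      _ = ∑' w, p x w * kpow p (m + 1) w y := rfl

lemma green_eq_add_tsum (x y : X) :
    green p x y = (if x = y then 1 else 0) + ∑' z, p x z * green p z y := by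
  rw [green, tsum_eq_zero_add' ENNReal.summable]
  simp_rw [kpow_succ', green, ← ENNReal.tsum_mul_left]
  exact congrArg _ ENNReal.tsum_comm

lemma green_le_of_supersolution (y : X) {h : X → ℝ≥0∞}
    (hh : ∀ x, (if x = y then 1 else 0) + ∑' z, p x z * h z ≤ h x) (x : X) :
    green p x y ≤ h x := by
  have partial_le : ∀ M x, ∑ m ∈ Finset.range M, kpow p m x y ≤ h x := by
    intro M
    induction M with
    | zero => simp
    | succ M ih =>
      intro x
      calc ∑ m ∈ Finset.range (M + 1), kpow p m x y
          = (if x = y then 1 else 0) + ∑' z, p x z * ∑ m ∈ Finset.range M, kpow p m z y := by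
            simp_rw [Finset.sum_range_succ', kpow_succ', Finset.mul_sum,
              Summable.tsum_finsetSum (fun _ _ => ENNReal.summable), kpow, add_comm]
        _ ≤ h x := le_trans (by gcongr with z; exact ih z) (hh x)
  exact ENNReal.tsum_le_of_sum_range_le fun M => partial_le M x

lemma green_eq_of_solution (y : X) {h : X → ℝ≥0∞}
    (hsol : ∀ x, h x = (if x = y then 1 else 0) + ∑' z, p x z * h z) (hfin : ∀ x, h x ≠ ∞)
    (hliouville :
      ∀ u : X → ℝ≥0∞, u ≤ h → (∀ x, u x = ∑' z, p x z * u z) → u = 0)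
    (x : X) :
    green p x y = h x := by
  have hle : ∀ x, green p x y ≤ h x := green_le_of_supersolution p y fun x => (hsol x).ge
  have hgreen_fin : ∀ x, green p x y ≠ ∞ := fun x => ne_top_of_le_ne_top (hfin x) (hle x)
  have harmonic : ∀ x, h x - green p x y = ∑' z, p x z * (h z - green p z y) := by
    intro x
    refine (ENNReal.eq_sub_of_add_eq (hgreen_fin x) ?_).symm
    rw [green_eq_add_tsum p x y, hsol x, add_left_comm, ← ENNReal.tsum_add]
    simp_rw [← mul_add, tsub_add_cancel_of_le (hle _)]
  have hzero := hliouville (fun x => h x - green p x y) (fun x => tsub_le_self) harmonic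
  exact le_antisymm (hle x) (tsub_eq_zero_iff_le.1 (congrFun hzero x))

end Green

noncomputable def birthDeath (a b : ℕ → ℝ≥0∞) (k j : ℕ) : ℝ≥0∞ :=
  if j = k + 1 then a k else if j + 1 = k then b k else if j = k then 1 - a k - b k else 0

lemma ENNReal.add_tsub_tsub_add_eq_one {s t : ℝ≥0∞} (h : s + t ≤ 1) :
    t + (1 - s - t) + s = 1 := by
  rw [tsub_tsub, add_right_comm, add_comm t s, add_tsub_cancel_of_le h]

-- `fm, f₀, fp` are values at `x - 1, x, x + 1` and `d, d'` the two decrements: this is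
-- `mean = f₀ + t * d - s * d'` written without subtraction.
lemma ENNReal.three_point_mean {s t fm f₀ fp d d' : ℝ≥0∞} (hst : s + t ≤ 1)
    (hm : fm = d + f₀) (hp : f₀ = d' + fp) :
    t * fm + (1 - s - t) * f₀ + s * fp + s * d' = t * d + f₀ := by
  calc t * fm + (1 - s - t) * f₀ + s * fp + s * d'
      = t * d + (t + (1 - s - t) + s) * f₀ := by rw [hm, hp]; ring
    _ = t * d + f₀ := by rw [ENNReal.add_tsub_tsub_add_eq_one hst, one_mul]

section BirthDeath

variable {a b : ℕ → ℝ≥0∞}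

lemma birthDeath_rates_ne_top (hab : ∀ k, a k + b k ≤ 1) (k : ℕ) :
    a k ≠ ∞ ∧ b k ≠ ∞ :=
  ENNReal.add_ne_top.1 (ne_top_of_le_ne_top ENNReal.one_ne_top (hab k))

lemma tsum_birthDeath_mul (hb_zero : b 0 = 0) (f : ℕ → ℝ≥0∞) (x : ℕ) :
    ∑' z, birthDeath a b x z * f z
      = b x * f (x - 1) + (1 - a x - b x) * f x + a x * f (x + 1) := by
  cases x with
  | zero =>
    rw [tsum_eq_sum (s := {0, 1}) fun z hz => by
      simp only [Finset.mem_insert, Finset.mem_singleton, not_or] at hz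
      simp [birthDeath, hz.1, hz.2]]
    simp [birthDeath, hb_zero]
  | succ k =>
    rw [tsum_eq_sum (s := {k, k + 1, k + 2}) fun z hz => by
      simp only [Finset.mem_insert, Finset.mem_singleton, not_or] at hz
      simp only [birthDeath]
      rw [if_neg (by omega), if_neg (by omega), if_neg (by omega), zero_mul]]
    simp [birthDeath, Finset.sum_insert, add_comm, add_left_comm, add_assoc]

variable (hb_zero : b 0 = 0) (ha_ne_zero : ∀ k, a k ≠ 0) (hab : ∀ k, a k + b k ≤ 1)
include hb_zero ha_ne_zero hab

lemma birthDeath_harmonic_succ_eq {u : ℕ → ℝ≥0∞} (hfin : ∀ x, u x ≠ ∞)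
    (hu : ∀ x, u x = ∑' z, birthDeath a b x z * u z) (x : ℕ) : u (x + 1) = u x := by
  have step : ∀ k, u (k - 1) = u k → u (k + 1) = u k := by
    intro k hk
    obtain ⟨haT, hbT⟩ := birthDeath_rates_ne_top hab k
    have hsame : b k * u k + (1 - a k - b k) * u k + a k * u (k + 1)
        = b k * u k + (1 - a k - b k) * u k + a k * u k :=
      calc _ = ∑' z, birthDeath a b k z * u z := by rw [tsum_birthDeath_mul hb_zero, hk]
        _ = (b k + (1 - a k - b k) + a k) * u k := by
          rw [← hu k, ENNReal.add_tsub_tsub_add_eq_one (hab k), one_mul]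
        _ = _ := by ring
    have hfin' : b k * u k + (1 - a k - b k) * u k ≠ ∞ := by
      have := hfin k
      finiteness
    exact (ENNReal.mul_right_inj (ha_ne_zero k) haT).1 ((ENNReal.add_right_inj hfin').1 hsame)
  induction x with
  | zero => exact step 0 rfl
  | succ k ih => exact step (k + 1) ih.symm

lemma birthDeath_harmonic_eq_zero {u h : ℕ → ℝ≥0∞} (hfin : ∀ x, h x ≠ ∞)
    (hlim : Tendsto h atTop (𝓝 0)) (hle : u ≤ h)
    (hu : ∀ x, u x = ∑' z, birthDeath a b x z * u z) : u = 0 := by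
  have hconst : ∀ x, u x = u 0 := by
    intro x
    induction x with
    | zero => rfl
    | succ k ih =>
      rw [← ih]
      exact birthDeath_harmonic_succ_eq hb_zero ha_ne_zero hab
        (fun x => ne_top_of_le_ne_top (hfin x) (hle x)) hu k
  funext x
  rw [hconst x]
  exact le_antisymm (ge_of_tendsto' hlim fun y => hconst y ▸ hle y) zero_le

end BirthDeath

-- `edgeResistance a b k` is the paper's `r(e_k)`, the resistance of the edge `[k - 1, k]`.
noncomputable def edgeResistance (a b : ℕ → ℝ≥0∞) (k : ℕ) : ℝ≥0∞ :=
  (∏ i ∈ Finset.Ico 1 k, b i) / ∏ i ∈ Finset.range k, a i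

section EdgeResistance

variable {a b : ℕ → ℝ≥0∞}

lemma edgeResistance_ne_zero (ha : ∀ k, a k ≠ ∞) (hb : ∀ k, 1 ≤ k → 0 < b k) (k : ℕ) :
    edgeResistance a b k ≠ 0 :=
  ENNReal.div_ne_zero.2 ⟨Finset.prod_ne_zero_iff.2 fun i hi => (hb i (Finset.mem_Ico.1 hi).1).ne',
    ENNReal.prod_ne_top fun i _ => ha i⟩

lemma edgeResistance_ne_top (ha : ∀ k, a k ≠ 0) (hb : ∀ k, b k ≠ ∞) (k : ℕ) :
    edgeResistance a b k ≠ ∞ :=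
  ENNReal.div_ne_top (ENNReal.prod_ne_top fun i _ => hb i)
    (Finset.prod_ne_zero_iff.2 fun i _ => ha i)

lemma mul_edgeResistance_succ {k : ℕ} (hk : 1 ≤ k) (ha0 : a k ≠ 0) (haT : a k ≠ ∞) :
    a k * edgeResistance a b (k + 1) = b k * edgeResistance a b k := by
  rw [edgeResistance, edgeResistance, Finset.prod_Ico_succ_top hk, Finset.prod_range_succ,
    ← mul_div_assoc, mul_comm (a k), ENNReal.mul_div_mul_right _ _ ha0 haT, mul_comm _ (b k),
    mul_div_assoc]

end EdgeResistance

noncomputable def tailSum (f : ℕ → ℝ≥0∞) (m : ℕ) : ℝ≥0∞ :=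
  ∑' k, if m + 1 ≤ k then f k else 0

section TailSum

variable (f : ℕ → ℝ≥0∞)

lemma tailSum_eq_add (m : ℕ) : tailSum f m = f (m + 1) + tailSum f (m + 1) := by
  rw [tailSum, tailSum, ← tsum_ite_eq (m + 1) f, ← ENNReal.tsum_add]
  refine tsum_congr fun k => ?_
  rcases lt_trichotomy k (m + 1) with h | rfl | h
  · simp [h.ne, show ¬ m + 1 ≤ k by omega, show ¬ m + 2 ≤ k by omega]
  · simp
  · simp [h.ne', h.le, show m + 2 ≤ k by omega]

lemma tailSum_eq_tsum_add (m : ℕ) : tailSum f m = ∑' k, f (k + m + 1) := by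
  rw [tailSum, ← Summable.sum_add_tsum_nat_add' (k := m + 1) ENNReal.summable,
    Finset.sum_eq_zero fun i hi => if_neg (by simp at hi; omega), zero_add]
  exact tsum_congr fun k => by rw [if_pos (by omega), add_assoc]

lemma tailSum_max_eq (n x : ℕ) :
    tailSum f (max x n) = (if n < x + 1 then f (x + 1) else 0) + tailSum f (max (x + 1) n) := by
  by_cases h : n ≤ x
  · rw [max_eq_left h, max_eq_left (by omega), if_pos (by omega), tailSum_eq_add]
  · rw [max_eq_right (by omega), max_eq_right (by omega), if_neg (by omega), zero_add]

variable {f} (hf : ∑' k, f (k + 1) ≠ ∞)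
include hf

lemma tailSum_ne_top (m : ℕ) : tailSum f m ≠ ∞ := by
  have h0 : tailSum f 0 ≠ ∞ := by simpa [tailSum_eq_tsum_add] using hf
  refine ne_top_of_le_ne_top h0 (ENNReal.tsum_le_tsum fun k => ?_)
  split_ifs <;> first | omega | simp

lemma tendsto_tailSum : Tendsto (tailSum f) atTop (𝓝 0) := by
  rw [funext (tailSum_eq_tsum_add f)]
  exact ENNReal.tendsto_sum_nat_add (fun k => f (k + 1)) hf

end TailSum

lemma birthDeath_tailSum_solution {a b r : ℕ → ℝ≥0∞} (hb_zero : b 0 = 0)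
    (hab : ∀ k, a k + b k ≤ 1) {n : ℕ}
    (hbalance : ∀ k, n ≤ k → a k * r (k + 1) = b k * r k) (hrb0 : r n * b n ≠ 0)
    (hrbT : r n * b n ≠ ∞) (htail : ∀ m, tailSum r m ≠ ∞) (x : ℕ) :
    (r n * b n)⁻¹ * tailSum r (max x n)
      = (if x = n then 1 else 0)
        + ∑' z, birthDeath a b x z * ((r n * b n)⁻¹ * tailSum r (max z n)) := by
  set E := (r n * b n)⁻¹
  set g : ℕ → ℝ≥0∞ := fun x => E * tailSum r (max x n) with hg
  set d : ℕ → ℝ≥0∞ := fun x => E * if n < x then r x else 0 with hd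
  have hnext : ∀ x, g x = d (x + 1) + g (x + 1) := fun x => by
    simp only [hg, hd]; rw [tailSum_max_eq, mul_add]
  have hprev : ∀ x, g (x - 1) = d x + g x := by
    rintro (_ | x)
    · simp [hd]
    · exact hnext x
  -- by detailed balance, the flux `a x * d (x + 1) - b x * d x` is `0` off `n` and `1` at `n`
  have hflux : a x * d (x + 1) = b x * d x + if x = n then 1 else 0 := by
    rcases lt_trichotomy x n with h | rfl | h
    · simp [hd, h.ne, show ¬ n < x + 1 by omega, show ¬ n < x by omega]
    · simp only [hd, lt_add_one, lt_irrefl, if_true, if_false, mul_zero, zero_add]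
      rw [mul_left_comm, hbalance x le_rfl, mul_comm (b x), ENNReal.inv_mul_cancel hrb0 hrbT]
    · simp only [hd, h, h.ne', if_true, if_false, add_zero, show n < x + 1 by omega]
      rw [mul_left_comm, hbalance x h.le, mul_left_comm]
  have hbd : b x * d x ≠ ∞ := by
    have hgT : g (x - 1) ≠ ∞ := ENNReal.mul_ne_top (ENNReal.inv_ne_top.2 hrb0) (htail _)
    exact ENNReal.mul_ne_top (birthDeath_rates_ne_top hab x).2
      (ne_top_of_le_ne_top hgT (hprev x ▸ le_self_add))
  have hmean := ENNReal.three_point_mean (hab x) (hprev x) (hnext x)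
  rw [hflux, ← tsum_birthDeath_mul hb_zero g x] at hmean
  refine ((ENNReal.add_right_inj hbd).1 ?_).symm
  rw [← hmean]
  ring

theorem nearest_neighbour_green_formula_general
    (a b : ℕ → ℝ≥0∞)
    (ha0 : ∀ k, 0 < a k)
    (hb0 : ∀ k, 1 ≤ k → 0 < b k)
    (hb00 : b 0 = 0) (hab : ∀ k, a k + b k ≤ 1)
    (P : ℕ → ℕ → ℝ≥0∞)
    (hP : ∀ k j, P k j =
      if j = k + 1 then a k
      else if j + 1 = k then b k
      else if j = k then 1 - a k - b k
      else 0)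
    (r : ℕ → ℝ≥0∞)
    (hr : ∀ k, r k = (∏ i ∈ Finset.Ico 1 k, b i) / ∏ i ∈ Finset.range k, a i)
    (hsum : ∑' k, r (k + 1) ≠ ∞) :
    ∀ n : ℕ, 1 ≤ n →
      green P n n = (1 / (r n * P n (n - 1))) * ∑' k : ℕ, if n + 1 ≤ k then r k else 0 := by
  intro n hn
  obtain rfl : P = birthDeath a b := funext fun k => funext (hP k)
  obtain rfl : r = edgeResistance a b := funext hr
  have haT k := (birthDeath_rates_ne_top hab k).1
  have hbT k := (birthDeath_rates_ne_top hab k).2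
  have ha_ne_zero k := (ha0 k).ne'
  have hrb0 : edgeResistance a b n * b n ≠ 0 :=
    mul_ne_zero (edgeResistance_ne_zero haT hb0 n) (hb0 n hn).ne'
  have hrbT : edgeResistance a b n * b n ≠ ∞ :=
    ENNReal.mul_ne_top (edgeResistance_ne_top ha_ne_zero hbT n) (hbT n)
  have hfin :
      ∀ x, (edgeResistance a b n * b n)⁻¹ * tailSum (edgeResistance a b) (max x n) ≠ ∞ :=
    fun x => ENNReal.mul_ne_top (ENNReal.inv_ne_top.2 hrb0) (tailSum_ne_top hsum _)
  have hlim : Tendsto (fun x => (edgeResistance a b n * b n)⁻¹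
      * tailSum (edgeResistance a b) (max x n)) atTop (𝓝 0) := by
    simpa using ENNReal.Tendsto.const_mul ((tendsto_tailSum hsum).comp
      (tendsto_atTop_mono (le_max_left · n) tendsto_id)) (Or.inr (ENNReal.inv_ne_top.2 hrb0))
  have hgreen := green_eq_of_solution (birthDeath a b) n
    (birthDeath_tailSum_solution hb00 hab
      (fun k hk => mul_edgeResistance_succ (hn.trans hk) (ha_ne_zero k) (haT k)) hrb0 hrbT
      (tailSum_ne_top hsum))
    hfin (fun u hle hu => birthDeath_harmonic_eq_zero hb00 ha_ne_zero hab hfin hlim hle hu) n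
  have hstep : birthDeath a b n (n - 1) = b n := by
    rw [birthDeath, if_neg (by omega), if_pos (by omega)]
  rw [hgreen, max_self, hstep, one_div]
  rfl

/-- For a transient nearest-neighbour random walk on ℕ₀, the Green function satisfies
`G(n,n) = (1/(r(e_n)·P(n,n-1))) · ∑_{k=n+1}^∞ r(e_k)` for every `n ≥ 1`. -/
theorem nearest_neighbour_green_formula
    (a b : ℕ → ℝ≥0∞)
    (ha0 : ∀ k, 0 < a k) (ha1 : ∀ k, a k < 1)
    (hb0 : ∀ k, 1 ≤ k → 0 < b k) (hb1 : ∀ k, b k < 1)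
    (hb00 : b 0 = 0) (hab : ∀ k, a k + b k ≤ 1)
    (P : ℕ → ℕ → ℝ≥0∞)
    (hP : ∀ k j, P k j =
      if j = k + 1 then a k
      else if j + 1 = k then b k
      else if j = k then 1 - a k - b k
      else 0)
    (r : ℕ → ℝ≥0∞)
    (hr : ∀ k, r k = (∏ i ∈ Finset.Ico 1 k, b i) / ∏ i ∈ Finset.range k, a i)
    (hsum : ∑' k, r (k + 1) ≠ ∞) :
    ∀ n : ℕ, 1 ≤ n →
      green P n n = (1 / (r n * P n (n - 1))) * ∑' k : ℕ, if n + 1 ≤ k then r k else 0 :=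
  nearest_neighbour_green_formula_general a b ha0 hb0 hb00 hab P hP r hr hsum
end
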